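/- Let 0 < ℓ ≤ 1 and suppose K : [0, π/√(2ℓ)] → ℝ is continuous with K(s) ≥ 2 for all s, and suppose ∫₀^{π/√(2ℓ)} (2ℓ·cos²(√(2ℓ)·s) − sin²(√(2ℓ)·s)·K(s)) ds ≥ 0. Then ℓ = 1 and K(s) = 2 for all s. -/

import Mathlib

/-!
Write `a = √(2ℓ)` and `T = π / a`. Since `cos²(a s)` and `sin²(a s)` both average to `1/2` over
`[0, T]`, the second variation splits as
`(2ℓ - 2) T / 2 - ∫₀ᵀ sin²(a s) (K s - 2) ds`, a sum of two non-positive terms. Its non-negativity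
forces `ℓ = 1` and makes the continuous non-negative function `sin²(a s) (K s - 2)` vanish on
`[0, T]`; as `sin (a s) ≠ 0` inside the interval, `K = 2` there, and at the endpoints by continuity.
-/

open Real Set MeasureTheory

lemma integral_sin_mul_sq {a : ℝ} (ha : a ≠ 0) :
    ∫ s in (0:ℝ)..π / a, sin (a * s) ^ 2 = π / (2 * a) := by
  rw [intervalIntegral.integral_comp_mul_left (fun x => sin x ^ 2) ha, mul_zero,
    mul_div_cancel₀ _ ha, integral_sin_sq]
  simp only [sin_zero, sin_pi, zero_mul, sub_zero, smul_eq_mul, zero_add]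
  field_simp

lemma integral_cos_mul_sq {a : ℝ} (ha : a ≠ 0) :
    ∫ s in (0:ℝ)..π / a, cos (a * s) ^ 2 = π / (2 * a) := by
  rw [intervalIntegral.integral_comp_mul_left (fun x => cos x ^ 2) ha, mul_zero,
    mul_div_cancel₀ _ ha, integral_cos_sq]
  simp only [sin_zero, sin_pi, mul_zero, sub_zero, smul_eq_mul, zero_add]
  field_simp

lemma integral_mul_cos_mul_sq_sub_sin_mul_sq_mul {a : ℝ} (ha : a ≠ 0) (c : ℝ) {K : ℝ → ℝ}
    (hK : ContinuousOn K (uIcc 0 (π / a))) :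
    ∫ s in (0:ℝ)..π / a, (c * cos (a * s) ^ 2 - sin (a * s) ^ 2 * K s)
      = (c - 2) * (π / (2 * a)) - ∫ s in (0:ℝ)..π / a, sin (a * s) ^ 2 * (K s - 2) := by
  have hcos : IntervalIntegrable (fun s => c * cos (a * s) ^ 2) volume 0 (π / a) :=
    Continuous.intervalIntegrable (by fun_prop) _ _
  have hsin : IntervalIntegrable (fun s => 2 * sin (a * s) ^ 2) volume 0 (π / a) :=
    Continuous.intervalIntegrable (by fun_prop) _ _
  have hrem : IntervalIntegrable (fun s => sin (a * s) ^ 2 * (K s - 2)) volume 0 (π / a) :=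
    ContinuousOn.intervalIntegrable (by fun_prop)
  calc ∫ s in (0:ℝ)..π / a, (c * cos (a * s) ^ 2 - sin (a * s) ^ 2 * K s)
      = ∫ s in (0:ℝ)..π / a,
          (c * cos (a * s) ^ 2 - 2 * sin (a * s) ^ 2 - sin (a * s) ^ 2 * (K s - 2)) :=
        intervalIntegral.integral_congr fun s _ => by ring
    _ = (c - 2) * (π / (2 * a)) - ∫ s in (0:ℝ)..π / a, sin (a * s) ^ 2 * (K s - 2) := by
        rw [intervalIntegral.integral_sub (hcos.sub hsin) hrem,
          intervalIntegral.integral_sub hcos hsin, intervalIntegral.integral_const_mul,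
          intervalIntegral.integral_const_mul, integral_cos_mul_sq ha, integral_sin_mul_sq ha]
        ring

lemma eqOn_zero_of_integral_eq_zero_of_nonneg {f : ℝ → ℝ} {a b : ℝ} (hab : a < b)
    (hf : ContinuousOn f (Icc a b)) (hf₀ : ∀ x ∈ Icc a b, 0 ≤ f x)
    (hint : ∫ x in a..b, f x = 0) : EqOn f 0 (Icc a b) := by
  have hae : f =ᵐ[volume.restrict (Ioc a b)] 0 :=
    (intervalIntegral.integral_eq_zero_iff_of_le_of_nonneg_ae hab.le
      (ae_restrict_of_forall_mem measurableSet_Ioc fun x hx => hf₀ x (Ioc_subset_Icc_self hx))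
      (hf.intervalIntegrable_of_Icc hab.le)).mp hint
  have hIoo : EqOn f 0 (Ioo a b) :=
    Measure.eqOn_Ioo_of_ae_eq volume (ae_restrict_of_ae_restrict_of_subset Ioo_subset_Ioc_self hae)
      (hf.mono Ioo_subset_Icc_self) continuousOn_const
  exact hIoo.of_subset_closure hf continuousOn_const Ioo_subset_Icc_self
    (closure_Ioo hab.ne).superset

lemma eqOn_zero_of_mul_eqOn_zero {φ g : ℝ → ℝ} {a b : ℝ} (hab : a < b)
    (hg : ContinuousOn g (Icc a b)) (hφ : ∀ x ∈ Ioo a b, φ x ≠ 0)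
    (h : EqOn (φ * g) 0 (Icc a b)) : EqOn g 0 (Icc a b) := by
  have hIoo : EqOn g 0 (Ioo a b) := fun x hx =>
    (mul_eq_zero.mp (h (Ioo_subset_Icc_self hx))).resolve_left (hφ x hx)
  exact hIoo.of_subset_closure hg continuousOn_const Ioo_subset_Icc_self
    (closure_Ioo hab.ne).superset

lemma sin_mul_pos {a s : ℝ} (ha : 0 < a) (hs : s ∈ Ioo 0 (π / a)) : 0 < sin (a * s) :=
  sin_pos_of_pos_of_lt_pi (mul_pos ha hs.1) ((lt_div_iff₀' ha).mp hs.2)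

/-- Second-variation rigidity: if `0 < ℓ ≤ 1`, `K ≥ 2` on `[0, π/√(2ℓ)]` and
`∫₀^{π/√(2ℓ)} (2ℓ cos²(√(2ℓ) s) − sin²(√(2ℓ) s) K(s)) ds ≥ 0`,
then `ℓ = 1` and `K ≡ 2`. -/
theorem stmt_6 (ℓ : ℝ) (hℓ0 : 0 < ℓ) (hℓ1 : ℓ ≤ 1) (K : ℝ → ℝ)
    (hcont : ContinuousOn K (Set.Icc 0 (Real.pi / Real.sqrt (2 * ℓ))))
    (hK2 : ∀ s ∈ Set.Icc 0 (Real.pi / Real.sqrt (2 * ℓ)), 2 ≤ K s)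
    (hvar : 0 ≤ ∫ s in (0:ℝ)..(Real.pi / Real.sqrt (2 * ℓ)),
      (2 * ℓ * Real.cos (Real.sqrt (2 * ℓ) * s) ^ 2
        - Real.sin (Real.sqrt (2 * ℓ) * s) ^ 2 * K s)) :
    ℓ = 1 ∧ ∀ s ∈ Set.Icc 0 (Real.pi / Real.sqrt (2 * ℓ)), K s = 2 := by
  set a := √(2 * ℓ)
  have ha : 0 < a := sqrt_pos.mpr (by linarith)
  have hT : 0 < π / a := div_pos pi_pos ha
  have hrem₀ : ∀ s ∈ Icc 0 (π / a), 0 ≤ sin (a * s) ^ 2 * (K s - 2) := fun s hs =>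
    mul_nonneg (sq_nonneg _) (sub_nonneg.mpr (hK2 s hs))
  have hrem_int : 0 ≤ ∫ s in (0:ℝ)..π / a, sin (a * s) ^ 2 * (K s - 2) :=
    intervalIntegral.integral_nonneg hT.le hrem₀
  rw [integral_mul_cos_mul_sq_sub_sin_mul_sq_mul ha.ne' _ (by rwa [uIcc_of_le hT.le])] at hvar
  have hℓ : ℓ = 1 := by nlinarith [div_pos pi_pos (mul_pos two_pos ha)]
  refine ⟨hℓ, fun s hs => sub_eq_zero.mp ?_⟩
  have hrem : EqOn (fun s => sin (a * s) ^ 2 * (K s - 2)) 0 (Icc 0 (π / a)) :=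
    eqOn_zero_of_integral_eq_zero_of_nonneg hT (by fun_prop) hrem₀ (by rw [hℓ] at hvar; linarith)
  exact eqOn_zero_of_mul_eqOn_zero (φ := fun s => sin (a * s) ^ 2) hT
    (hcont.sub continuousOn_const) (fun s hs => (pow_pos (sin_mul_pos ha hs) 2).ne') hrem hs
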